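/- arXiv:0906.2501 — 2 statements merged into one kernel-verified Lean document; each statement's English description precedes it below -/
import Mathlib

section
/- Any nontrivial C² localized solution of the ODE α̂ φ'' − γ φ'((φ')² + 3φφ'') = Ω̂ φ with α̂ ≠ 0, Ω̂ ≠ 0 and φ(x), φ'(x) → 0 as |x| → ∞ must be identically zero. (No classical localized solutions exist.) -/
/-!
Multiplying the equation by `φ'` exhibits it as `E' = 0` for the first integral
`E = α̂/2 φ'² - γ φ φ'³ - Ω̂/2 φ²`, so `E` is constant, and it vanishes because `φ` and `φ'`
decay at infinity. If `φ` were not identically zero, `|φ|` would attain a positive maximum at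
some `a`; there `φ'(a) = 0`, so `0 = E(a) = -Ω̂/2 φ(a)²`, contradicting `Ω̂ ≠ 0`.
-/

open Filter Topology

theorem exists_isLocalExtr_ne_zero_of_tendsto_cocompact {β : Type*} [TopologicalSpace β]
    {f : β → ℝ} (hf : Continuous f) (hlim : Tendsto f (cocompact β) (𝓝 0))
    {x₀ : β} (hx₀ : f x₀ ≠ 0) : ∃ a, f a ≠ 0 ∧ IsLocalExtr f a := by
  have hpos : 0 < |f x₀| := abs_pos.mpr hx₀
  have hlim_abs : Tendsto (|f ·|) (cocompact β) (𝓝 0) := by simpa using hlim.abs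
  have hev : ∀ᶠ x in cocompact β, |f x| ≤ |f x₀| :=
    (hlim_abs.eventually_lt_const hpos).mono fun _ => le_of_lt
  obtain ⟨a, ha⟩ := hf.abs.exists_forall_ge' x₀ hev
  have hfa : f a ≠ 0 := abs_pos.mp (hpos.trans_le (ha x₀))
  refine ⟨a, hfa, ?_⟩
  rcases hfa.lt_or_gt with hneg | hpos'
  · exact Or.inl <| Filter.Eventually.of_forall fun y => by
      have := ha y; rw [abs_of_neg hneg] at this; linarith [neg_le_abs (f y)]
  · exact Or.inr <| Filter.Eventually.of_forall fun y => by
      have := ha y; rw [abs_of_pos hpos'] at this; linarith [le_abs_self (f y)]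

theorem eq_zero_of_hasDerivAt_zero_of_tendsto_cocompact {f : ℝ → ℝ} (hf : ∀ x, HasDerivAt f 0 x)
    (hlim : Tendsto f (cocompact ℝ) (𝓝 0)) (x : ℝ) : f x = 0 := by
  have hconst : f = fun _ => f x := funext fun y =>
    is_const_of_deriv_eq_zero (fun z => (hf z).differentiableAt) (fun z => (hf z).deriv) y x
  rw [hconst] at hlim
  exact tendsto_nhds_unique tendsto_const_nhds hlim

/-- First integral of `α φ'' - γ φ' (φ'² + 3 φ φ'') = Ω φ`. -/
noncomputable def firstIntegral (α γ Ω : ℝ) (φ : ℝ → ℝ) (x : ℝ) : ℝ :=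
  α / 2 * deriv φ x ^ 2 - γ * (φ x * deriv φ x ^ 3) - Ω / 2 * φ x ^ 2

theorem hasDerivAt_firstIntegral (α γ Ω : ℝ) {φ : ℝ → ℝ} {x : ℝ}
    (h₁ : DifferentiableAt ℝ φ x) (h₂ : DifferentiableAt ℝ (deriv φ) x) :
    HasDerivAt (firstIntegral α γ Ω φ)
      (deriv φ x * (α * deriv (deriv φ) x
        - γ * deriv φ x * (deriv φ x ^ 2 + 3 * φ x * deriv (deriv φ) x) - Ω * φ x)) x := by
  have h : HasDerivAt (fun y => α / 2 * deriv φ y ^ 2 - γ * (φ y * deriv φ y ^ 3) - Ω / 2 * φ y ^ 2)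
      _ x := (((h₂.hasDerivAt.pow 2).const_mul (α / 2)).sub
    ((h₁.hasDerivAt.mul (h₂.hasDerivAt.pow 3)).const_mul γ)).sub
    ((h₁.hasDerivAt.pow 2).const_mul (Ω / 2))
  exact h.congr_deriv (by simp only [Pi.pow_apply]; ring)

theorem tendsto_firstIntegral_cocompact (α γ Ω : ℝ) {φ : ℝ → ℝ}
    (hφ : Tendsto φ (cocompact ℝ) (𝓝 0)) (hφ' : Tendsto (deriv φ) (cocompact ℝ) (𝓝 0)) :
    Tendsto (firstIntegral α γ Ω φ) (cocompact ℝ) (𝓝 0) := by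
  unfold firstIntegral
  simpa using (((hφ'.pow 2).const_mul (α / 2)).sub
    ((hφ.mul (hφ'.pow 3)).const_mul γ)).sub ((hφ.pow 2).const_mul (Ω / 2))

theorem stmt_10_general (αh γ Ωh : ℝ) (hΩ : Ωh ≠ 0)
    (φ : ℝ → ℝ) (hφ : ContDiff ℝ 2 φ)
    (hode : ∀ x : ℝ, αh * deriv (deriv φ) x
        - γ * deriv φ x * ((deriv φ x)^2 + 3 * φ x * deriv (deriv φ) x)
        = Ωh * φ x)
    (hdecay : Tendsto φ (Filter.cocompact ℝ) (nhds 0))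
    (hdecay' : Tendsto (deriv φ) (Filter.cocompact ℝ) (nhds 0)) :
    ∀ x : ℝ, φ x = 0 := by
  have h₁ : Differentiable ℝ φ := hφ.differentiable two_ne_zero
  have h₂ : Differentiable ℝ (deriv φ) := hφ.differentiable_deriv_two
  have hE : ∀ x, HasDerivAt (firstIntegral αh γ Ωh φ) 0 x := fun x => by
    simpa [hode x] using hasDerivAt_firstIntegral αh γ Ωh (h₁ x) (h₂ x)
  have hE_zero : ∀ x, firstIntegral αh γ Ωh φ x = 0 :=
    eq_zero_of_hasDerivAt_zero_of_tendsto_cocompact hE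
      (tendsto_firstIntegral_cocompact αh γ Ωh hdecay hdecay')
  by_contra! ⟨x₀, hx₀⟩
  obtain ⟨a, hφa, hextr⟩ := exists_isLocalExtr_ne_zero_of_tendsto_cocompact h₁.continuous hdecay hx₀
  have hE_a := hE_zero a
  simp only [firstIntegral, hextr.deriv_eq_zero] at hE_a
  have : Ωh * φ a ^ 2 = 0 := by linarith
  exact pow_ne_zero 2 hφa ((mul_eq_zero.mp this).resolve_left hΩ)

theorem stmt_10 (αh γ Ωh : ℝ) (hα : αh ≠ 0) (hΩ : Ωh ≠ 0)
    (φ : ℝ → ℝ) (hφ : ContDiff ℝ 2 φ)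
    (hode : ∀ x : ℝ, αh * deriv (deriv φ) x
        - γ * deriv φ x * ((deriv φ x)^2 + 3 * φ x * deriv (deriv φ) x)
        = Ωh * φ x)
    (hdecay : Tendsto φ (Filter.cocompact ℝ) (nhds 0))
    (hdecay' : Tendsto (deriv φ) (Filter.cocompact ℝ) (nhds 0)) :
    ∀ x : ℝ, φ x = 0 :=
  stmt_10_general αh γ Ωh hΩ φ hφ hode hdecay hdecay'
end

section
/- Suppose Ψ₀, Ψ₂ are 2π-periodic C² functions and V is 2π-periodic continuous, E₀ ∈ ℝ, with -Ψ₂'' + VΨ₂ - E₀Ψ₂ = -GΨ₀³ for a 2π-periodic continuous G, and -Ψ₀'' + VΨ₀ - E₀Ψ₀ = 0. Also suppose Ψ₁ is a 2π-periodic C² solution of -Ψ₁'' + VΨ₁ - E₀Ψ₁ = 2Ψ₀'. Then γ := -2∫₀^{2π} Ψ₂'(x)Ψ₀(x) dx + ∫₀^{2π} G(x)Ψ₀(x)³Ψ₁(x) dx = 0. -/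
open MeasureTheory intervalIntegral

/-!
The integrand `G Ψ₀³ Ψ₁ - 2 Ψ₂' Ψ₀` has the periodic primitive `W(Ψ₂, Ψ₁) - 2 Ψ₂ Ψ₀`, where
`W(u, w) = u' w - w' u`: for solutions of `-y'' + (V - E₀) y = f`, the potential cancels from `W'`,
leaving `W(Ψ₂, Ψ₁)' = 2 Ψ₀' Ψ₂ + G Ψ₀³ Ψ₁`, and the term `2 Ψ₀' Ψ₂` is absorbed by `(Ψ₂ Ψ₀)'`.
The integral over a period of the derivative of a periodic function vanishes.
-/

theorem Function.Periodic.deriv {f : ℝ → ℝ} {c : ℝ} (hf : Function.Periodic f c) :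
    Function.Periodic (deriv f) c := fun x => by
  rw [← deriv_comp_add_const, show (fun y => f (y + c)) = f from funext hf]

theorem Function.Periodic.integral_eq_zero_of_hasDerivAt {F f : ℝ → ℝ} {T : ℝ}
    (hF : Function.Periodic F T) (hderiv : ∀ x, HasDerivAt F (f x) x) (hf : Continuous f)
    (a : ℝ) : ∫ x in a..a + T, f x = 0 := by
  rw [integral_eq_sub_of_hasDerivAt (fun x _ => hderiv x) (hf.intervalIntegrable _ _), hF,
    sub_self]

theorem hasDerivAt_wronskian {u w : ℝ → ℝ} {x : ℝ} (hu : DifferentiableAt ℝ u x)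
    (hw : DifferentiableAt ℝ w x) (hu' : DifferentiableAt ℝ (deriv u) x)
    (hw' : DifferentiableAt ℝ (deriv w) x) :
    HasDerivAt (fun y => deriv u y * w y - deriv w y * u y)
      (deriv (deriv u) x * w x - deriv (deriv w) x * u x) x :=
  ((hu'.hasDerivAt.mul hw.hasDerivAt).sub (hw'.hasDerivAt.mul hu.hasDerivAt)).congr_deriv
    (by ring)

theorem hasDerivAt_wronskian_of_schrodinger {V u w f g : ℝ → ℝ} {E : ℝ}
    (hu : ContDiff ℝ 2 u) (hw : ContDiff ℝ 2 w)
    (hequ : ∀ x, -deriv (deriv u) x + V x * u x - E * u x = f x)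
    (heqw : ∀ x, -deriv (deriv w) x + V x * w x - E * w x = g x) (x : ℝ) :
    HasDerivAt (fun y => deriv u y * w y - deriv w y * u y) (g x * u x - f x * w x) x := by
  have hdu := (hu.iterate_deriv' 1 1).differentiable one_ne_zero
  have hdw := (hw.iterate_deriv' 1 1).differentiable one_ne_zero
  exact (hasDerivAt_wronskian (hu.differentiable two_ne_zero x)
    (hw.differentiable two_ne_zero x) (hdu x) (hdw x)).congr_deriv
    (by linear_combination u x * heqw x - w x * hequ x)

theorem stmt_11_general (V G Ψ₀ Ψ₁ Ψ₂ : ℝ → ℝ) (E₀ : ℝ)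
    (hG : Continuous G)
    (hΨ₀ : ContDiff ℝ 2 Ψ₀) (hΨ₀per : ∀ x, Ψ₀ (x + 2 * Real.pi) = Ψ₀ x)
    (hΨ₁ : ContDiff ℝ 2 Ψ₁) (hΨ₁per : ∀ x, Ψ₁ (x + 2 * Real.pi) = Ψ₁ x)
    (hΨ₂ : ContDiff ℝ 2 Ψ₂) (hΨ₂per : ∀ x, Ψ₂ (x + 2 * Real.pi) = Ψ₂ x)
    (heq1 : ∀ x, -(deriv (deriv Ψ₁) x) + V x * Ψ₁ x - E₀ * Ψ₁ x = 2 * deriv Ψ₀ x)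
    (heq2 : ∀ x, -(deriv (deriv Ψ₂) x) + V x * Ψ₂ x - E₀ * Ψ₂ x
        = -(G x * (Ψ₀ x)^3)) :
    -2 * (∫ x in (0:ℝ)..(2 * Real.pi), deriv Ψ₂ x * Ψ₀ x)
      + (∫ x in (0:ℝ)..(2 * Real.pi), G x * (Ψ₀ x)^3 * Ψ₁ x) = 0 := by
  have hΨ₀c := hΨ₀.continuous
  have hΨ₁c := hΨ₁.continuous
  have hΨ₂' := hΨ₂.continuous_deriv one_le_two
  have hderiv : ∀ x, HasDerivAt
      (fun y => (deriv Ψ₂ y * Ψ₁ y - deriv Ψ₁ y * Ψ₂ y) - 2 * (Ψ₂ y * Ψ₀ y))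
      (G x * Ψ₀ x ^ 3 * Ψ₁ x - 2 * (deriv Ψ₂ x * Ψ₀ x)) x := fun x =>
    ((hasDerivAt_wronskian_of_schrodinger hΨ₂ hΨ₁ heq2 heq1 x).sub
      (((hΨ₂.differentiable two_ne_zero x).hasDerivAt.mul
        (hΨ₀.differentiable two_ne_zero x).hasDerivAt).const_mul 2)).congr_deriv (by ring)
  have hper : Function.Periodic
      (fun y => (deriv Ψ₂ y * Ψ₁ y - deriv Ψ₁ y * Ψ₂ y) - 2 * (Ψ₂ y * Ψ₀ y)) (2 * Real.pi) :=
    fun x => by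
      simp only [Function.Periodic.deriv hΨ₁per x, Function.Periodic.deriv hΨ₂per x, hΨ₀per x,
        hΨ₁per x, hΨ₂per x]
  have h := hper.integral_eq_zero_of_hasDerivAt hderiv (by fun_prop) 0
  rw [zero_add, integral_sub ((by fun_prop : Continuous _).intervalIntegrable _ _)
    ((by fun_prop : Continuous _).intervalIntegrable _ _),
    intervalIntegral.integral_const_mul] at h
  linarith

theorem stmt_11 (V G Ψ₀ Ψ₁ Ψ₂ : ℝ → ℝ) (E₀ : ℝ)
    (hV : Continuous V) (hVper : ∀ x, V (x + 2 * Real.pi) = V x)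
    (hG : Continuous G) (hGper : ∀ x, G (x + 2 * Real.pi) = G x)
    (hΨ₀ : ContDiff ℝ 2 Ψ₀) (hΨ₀per : ∀ x, Ψ₀ (x + 2 * Real.pi) = Ψ₀ x)
    (hΨ₁ : ContDiff ℝ 2 Ψ₁) (hΨ₁per : ∀ x, Ψ₁ (x + 2 * Real.pi) = Ψ₁ x)
    (hΨ₂ : ContDiff ℝ 2 Ψ₂) (hΨ₂per : ∀ x, Ψ₂ (x + 2 * Real.pi) = Ψ₂ x)
    (heq0 : ∀ x, -(deriv (deriv Ψ₀) x) + V x * Ψ₀ x - E₀ * Ψ₀ x = 0)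
    (heq1 : ∀ x, -(deriv (deriv Ψ₁) x) + V x * Ψ₁ x - E₀ * Ψ₁ x = 2 * deriv Ψ₀ x)
    (heq2 : ∀ x, -(deriv (deriv Ψ₂) x) + V x * Ψ₂ x - E₀ * Ψ₂ x
        = -(G x * (Ψ₀ x)^3)) :
    -2 * (∫ x in (0:ℝ)..(2 * Real.pi), deriv Ψ₂ x * Ψ₀ x)
      + (∫ x in (0:ℝ)..(2 * Real.pi), G x * (Ψ₀ x)^3 * Ψ₁ x) = 0 :=
  stmt_11_general V G Ψ₀ Ψ₁ Ψ₂ E₀ hG hΨ₀ hΨ₀per hΨ₁ hΨ₁per hΨ₂ hΨ₂per heq1 heq2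
end
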